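/- arXiv:2303.15919 — 6 statements merged into one kernel-verified Lean document; each statement's English description precedes it below -/
import Mathlib

section
/- Let w ∈ ℝ^{n+1} satisfy ⟨w, w⟩_L > 0, and let x ∈ L^n_K. Define the Lorentz hyperplane H_w := {y ∈ L^n_K : ⟨w, y⟩_L = 0}. Then H_w is nonempty and the infimum of d_L(x, y) over y ∈ H_w equals (1/√(−K))·|arsinh( √(−K)·⟨w, x⟩_L / √(⟨w, w⟩_L) )|, where arsinh is the inverse hyperbolic sine. -/
open scoped RealInnerProductSpace

noncomputable section

/-- Lorentzian inner product on `ℝ^{n+1} = ℝ × ℝ^n` (time component first). -/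
def lprod {n : ℕ} (x y : ℝ × EuclideanSpace ℝ (Fin n)) : ℝ :=
  -(x.1 * y.1) + ⟪x.2, y.2⟫

/-- The Lorentz model `L^n_K`. -/
def LorentzModel (n : ℕ) (K : ℝ) : Set (ℝ × EuclideanSpace ℝ (Fin n)) :=
  {x | lprod x x = 1 / K ∧ 0 < x.1}

/-- Inverse hyperbolic cosine: `arcosh t = log (t + √(t² − 1))`. -/
def arcosh (t : ℝ) : ℝ := Real.log (t + Real.sqrt (t ^ 2 - 1))

/-- Geodesic distance on the Lorentz model. -/
def dL {n : ℕ} (K : ℝ) (x y : ℝ × EuclideanSpace ℝ (Fin n)) : ℝ :=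
  (1 / Real.sqrt (-K)) * arcosh (K * lprod x y)

/-- Origin of the Lorentz model. -/
def lorigin (n : ℕ) (K : ℝ) : ℝ × EuclideanSpace ℝ (Fin n) :=
  (1 / Real.sqrt (-K), 0)

lemma lprod_comm {n : ℕ} (x y : ℝ × EuclideanSpace ℝ (Fin n)) : lprod x y = lprod y x := by
  simp [lprod, real_inner_comm x.2 y.2, mul_comm]

lemma lprod_sub_left {n : ℕ} (x y z : ℝ × EuclideanSpace ℝ (Fin n)) :
    lprod (x - y) z = lprod x z - lprod y z := by
  simp [lprod, inner_sub_left]; ring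

lemma lprod_smul_left {n : ℕ} (r : ℝ) (x y : ℝ × EuclideanSpace ℝ (Fin n)) :
    lprod (r • x) y = r * lprod x y := by
  unfold lprod
  rw [Prod.smul_fst, Prod.smul_snd, real_inner_smul_left, smul_eq_mul]; ring

lemma lprod_self {n : ℕ} (x : ℝ × EuclideanSpace ℝ (Fin n)) :
    lprod x x = -(x.1^2) + ‖x.2‖^2 := by
  unfold lprod
  rw [real_inner_self_eq_norm_sq]; ring

/-- reverse Cauchy–Schwarz for future timelike vectors -/
lemma revCS {n : ℕ} (v y : ℝ × EuclideanSpace ℝ (Fin n))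
    (hv : lprod v v < 0) (hy : lprod y y < 0) (hv1 : 0 < v.1) (hy1 : 0 < y.1) :
    lprod v y ≤ -Real.sqrt (lprod v v * lprod y y) := by
  have hvs := lprod_self v
  have hys := lprod_self y
  have hip : ⟪v.2, y.2⟫ ≤ ‖v.2‖ * ‖y.2‖ := real_inner_le_norm _ _
  set A := v.1; set a := ‖v.2‖; set B := y.1; set b := ‖y.2‖
  have ha : 0 ≤ a := norm_nonneg _
  have hb : 0 ≤ b := norm_nonneg _
  have hA : a < A := by nlinarith [hvs, hv]
  have hB : b < B := by nlinarith [hys, hy]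
  have key : Real.sqrt (lprod v v * lprod y y) ≤ A * B - a * b := by
    rw [show lprod v v * lprod y y = (A*B - a*b)^2 - (A*b - a*B)^2 by rw [hvs, hys]; ring]
    calc Real.sqrt ((A*B - a*b)^2 - (A*b - a*B)^2) ≤ Real.sqrt ((A*B - a*b)^2) :=
          Real.sqrt_le_sqrt (by nlinarith [sq_nonneg (A*b - a*B)])
      _ = A*B - a*b := Real.sqrt_sq (by nlinarith)
  have : lprod v y ≤ -(A*B) + a*b := by
    simp only [lprod]; linarith [hip]
  linarith

/-- same-cone lemma -/
lemma future {n : ℕ} (x z : ℝ × EuclideanSpace ℝ (Fin n))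
    (hx : lprod x x < 0) (hz : lprod z z < 0) (hxz : lprod x z < 0) (hx1 : 0 < x.1) :
    0 < z.1 := by
  have hxs := lprod_self x
  have hzs := lprod_self z
  have hip : -(‖x.2‖ * ‖z.2‖) ≤ ⟪x.2, z.2⟫ := neg_le_of_abs_le (abs_real_inner_le_norm _ _)
  have hlx : lprod x z = -(x.1 * z.1) + ⟪x.2, z.2⟫ := rfl
  have ha : (0:ℝ) ≤ ‖x.2‖ := norm_nonneg _
  have hb : (0:ℝ) ≤ ‖z.2‖ := norm_nonneg _
  by_contra h
  push_neg at h
  have hb2 : ‖z.2‖ < -z.1 := by nlinarith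
  have hA : ‖x.2‖ < x.1 := by nlinarith
  have hmul : ‖x.2‖ * ‖z.2‖ ≤ x.1 * (-z.1) := mul_le_mul hA.le hb2.le hb hx1.le
  nlinarith [hmul]

lemma arcosh_mono {a b : ℝ} (ha : 1 ≤ a) (hab : a ≤ b) : arcosh a ≤ arcosh b := by
  unfold arcosh
  apply Real.log_le_log (by positivity)
  have : Real.sqrt (a^2-1) ≤ Real.sqrt (b^2-1) := Real.sqrt_le_sqrt (by nlinarith)
  linarith

lemma arcosh_sqrt_one_add_sq (s : ℝ) :
    arcosh (Real.sqrt (1 + s^2)) = |Real.arsinh s| := by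
  unfold arcosh
  have h1 : (0:ℝ) ≤ 1 + s^2 := by positivity
  have h2 : (Real.sqrt (1 + s^2))^2 = 1 + s^2 := Real.sq_sqrt h1
  have h3 : Real.sqrt ((Real.sqrt (1 + s^2))^2 - 1) = |s| := by
    rw [h2, show 1 + s^2 - 1 = s^2 by ring, Real.sqrt_sq_eq_abs]
  rw [h3]
  have habs : |Real.arsinh s| = Real.arsinh |s| := by
    rcases le_or_gt 0 s with h | h
    · rw [abs_of_nonneg h, abs_of_nonneg (Real.arsinh_nonneg_iff.2 h)]
    · rw [abs_of_neg h, abs_of_neg (Real.arsinh_neg_iff.2 h), ← Real.arsinh_neg]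
  rw [habs, Real.arsinh, show 1 + |s|^2 = 1 + s^2 by rw [sq_abs]]
  ring_nf

theorem distance_to_lorentz_hyperplane
    (n : ℕ) (hn : 1 ≤ n) (K : ℝ) (hK : K < 0)
    (w : ℝ × EuclideanSpace ℝ (Fin n)) (hw : 0 < lprod w w)
    (x : ℝ × EuclideanSpace ℝ (Fin n)) (hx : x ∈ LorentzModel n K)
    (H : Set (ℝ × EuclideanSpace ℝ (Fin n)))
    (hH : H = {y ∈ LorentzModel n K | lprod w y = 0}) :
    H.Nonempty ∧
    sInf (dL K x '' H) =
      (1 / Real.sqrt (-K)) *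
        |Real.arsinh (Real.sqrt (-K) * lprod w x / Real.sqrt (lprod w w))| := by
  obtain ⟨hxL, hx1⟩ := hx
  have hK' : 0 < -K := neg_pos.2 hK
  have hKne : K ≠ 0 := hK.ne
  set c := lprod w w with hc_def
  set p := lprod w x with hp_def
  set z : ℝ × EuclideanSpace ℝ (Fin n) := x - (p / c) • w with hz_def
  have hwz : lprod w z = 0 := by
    rw [lprod_comm, hz_def, lprod_sub_left, lprod_smul_left, lprod_comm x w, ← hp_def,
      ← hc_def]
    field_simp
    ring
  set m := 1/K - p^2/c with hm_def
  have hxz : lprod x z = m := by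
    rw [hz_def, lprod_comm, lprod_sub_left, lprod_smul_left, hxL, ← hp_def, hm_def]
    ring
  have hzz : lprod z z = m := by
    nth_rewrite 1 [hz_def]
    rw [lprod_sub_left, lprod_smul_left, hwz, hxz]
    ring
  have h1K : 1/K < 0 := one_div_neg.2 hK
  have hm_neg : m < 0 := by
    have : 0 ≤ p^2/c := by positivity
    rw [hm_def]; linarith
  have hKm : K * m = 1 - K * p^2 / c := by
    rw [hm_def]; field_simp
  have hKm1 : 1 ≤ K * m := by
    have h0 : K * p ^ 2 / c ≤ 0 :=
      div_nonpos_of_nonpos_of_nonneg (mul_nonpos_of_nonpos_of_nonneg hK.le (sq_nonneg p)) hw.le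
    rw [hKm]; linarith
  have hKm0 : 0 < K * m := lt_of_lt_of_le one_pos hKm1
  have hsq : (Real.sqrt (K*m))^2 = K*m := Real.sq_sqrt hKm0.le
  have hsqpos : 0 < Real.sqrt (K*m) := Real.sqrt_pos.2 hKm0
  set r := (Real.sqrt (K*m))⁻¹ with hr_def
  have hr : 0 < r := inv_pos.2 hsqpos
  have hz1 : 0 < z.1 := by
    refine future x z ?_ ?_ ?_ hx1
    · rw [hxL]; exact h1K
    · rw [hzz]; exact hm_neg
    · rw [hxz]; exact hm_neg
  set y0 := r • z with hy0_def
  have hy01 : 0 < y0.1 := by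
    rw [hy0_def, Prod.smul_fst, smul_eq_mul]
    exact mul_pos hr hz1
  have hy0y0 : lprod y0 y0 = 1/K := by
    rw [hy0_def, lprod_smul_left, lprod_comm, lprod_smul_left, lprod_comm z, hzz]
    rw [hr_def]
    field_simp
    nlinarith [hsq]
  have hwy0 : lprod w y0 = 0 := by
    rw [hy0_def, lprod_comm, lprod_smul_left, lprod_comm z w, hwz, mul_zero]
  have hy0H : y0 ∈ H := by
    rw [hH]; exact ⟨⟨hy0y0, hy01⟩, hwy0⟩
  have hxy0 : K * lprod x y0 = Real.sqrt (K*m) := by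
    rw [hy0_def, lprod_comm, lprod_smul_left, lprod_comm z x, hxz, hr_def]
    rw [show K * ((Real.sqrt (K*m))⁻¹ * m) = (K*m) / Real.sqrt (K*m) by ring]
    exact Real.div_sqrt
  have hlow : ∀ y ∈ H, Real.sqrt (K*m) ≤ K * lprod x y := by
    intro y hy
    rw [hH] at hy
    obtain ⟨⟨hyL, hy1⟩, hwy⟩ := hy
    have h1 : lprod x y = lprod z y := by
      rw [hz_def, lprod_sub_left, lprod_smul_left, hwy, mul_zero, sub_zero]
    have h2 : lprod z y ≤ -Real.sqrt (lprod z z * lprod y y) := by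
      refine revCS z y ?_ ?_ hz1 hy1
      · rw [hzz]; exact hm_neg
      · rw [hyL]; exact h1K
    rw [hzz, hyL] at h2
    have h3 : Real.sqrt (m * (1/K)) = Real.sqrt (K*m) / (-K) := by
      rw [show m * (1/K) = (K*m) / K^2 by field_simp,
        Real.sqrt_div hKm0.le, Real.sqrt_sq_eq_abs, abs_of_neg hK]
    rw [h1]
    rw [h3] at h2
    have h4 : K * lprod z y ≥ K * (-(Real.sqrt (K*m) / (-K))) :=
      mul_le_mul_of_nonpos_left h2 hK.le
    have h5 : K * (-(Real.sqrt (K*m) / (-K))) = Real.sqrt (K*m) := by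
      field_simp
    linarith
  have hone_le_sqrt : 1 ≤ Real.sqrt (K*m) := by
    rw [show (1:ℝ) = Real.sqrt 1 by simp]
    exact Real.sqrt_le_sqrt hKm1
  have hleast : IsLeast (dL K x '' H) (dL K x y0) := by
    constructor
    · exact ⟨y0, hy0H, rfl⟩
    · rintro v ⟨y, hy, rfl⟩
      unfold dL
      apply mul_le_mul_of_nonneg_left _ (by positivity)
      apply arcosh_mono
      · rw [hxy0]; exact hone_le_sqrt
      · rw [hxy0]; exact hlow y hy
  refine ⟨⟨y0, hy0H⟩, ?_⟩
  rw [hleast.csInf_eq]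
  unfold dL
  congr 1
  set s := Real.sqrt (-K) * p / Real.sqrt c with hs_def
  have hs2 : s^2 = -K * p^2 / c := by
    rw [hs_def, div_pow, mul_pow, Real.sq_sqrt hK'.le, Real.sq_sqrt hw.le]
  have hKm1s : K * m = 1 + s^2 := by
    rw [hKm, hs2]; ring
  rw [hxy0, hKm1s, arcosh_sqrt_one_add_sq]
end
end

section
/- (Hyperplane reparameterization, Eq. 9.) Let a ∈ ℝ and z ∈ ℝ^n with z ≠ 0, and set p := (1/√(−K))·( cosh(√(−K)·a), sinh(√(−K)·a)·z/‖z‖ ) ∈ ℝ^{n+1}. Then the parallel transport from the origin 0̄ to p of the tangent vector z̄ := (0, z), given by PT_{0̄→p}(z̄) := z̄ + ( ⟨p, z̄⟩_L / (1/(−K) − ⟨0̄, p⟩_L) )·(0̄ + p), equals w := ( sinh(√(−K)·a)·‖z‖, cosh(√(−K)·a)·z ). -/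
open scoped RealInnerProductSpace

noncomputable section

theorem parallel_transport_of_zbar_eq_w
    (n : ℕ) (hn : 1 ≤ n) (K : ℝ) (hK : K < 0)
    (a : ℝ) (z : EuclideanSpace ℝ (Fin n)) (hz : z ≠ 0)
    (p : ℝ × EuclideanSpace ℝ (Fin n))
    (hp : p = (1 / Real.sqrt (-K)) •
      ((Real.cosh (Real.sqrt (-K) * a),
        Real.sinh (Real.sqrt (-K) * a) • (‖z‖⁻¹ • z)) :
        ℝ × EuclideanSpace ℝ (Fin n)))
    (zbar : ℝ × EuclideanSpace ℝ (Fin n)) (hzbar : zbar = ((0 : ℝ), z)) :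
    zbar + (lprod p zbar / (1 / (-K) - lprod (lorigin n K) p)) •
        (lorigin n K + p) =
      ((Real.sinh (Real.sqrt (-K) * a) * ‖z‖,
        Real.cosh (Real.sqrt (-K) * a) • z) : ℝ × EuclideanSpace ℝ (Fin n)) := by
  subst hp hzbar
  set s := Real.sqrt (-K) with hs
  have hs0 : 0 < s := Real.sqrt_pos.mpr (by linarith)
  have hs2 : s ^ 2 = -K := Real.sq_sqrt (by linarith)
  set c := Real.cosh (s * a) with hc
  set sh := Real.sinh (s * a) with hsh
  have hc1 : 1 ≤ c := Real.one_le_cosh _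
  have hznorm : (0:ℝ) < ‖z‖ := norm_pos_iff.mpr hz
  have hsq : sh ^ 2 = c ^ 2 - 1 := by
    have := Real.cosh_sq_sub_sinh_sq (s * a); nlinarith
  have hinner : ⟪(sh • (‖z‖⁻¹ • z) : EuclideanSpace ℝ (Fin n)), z⟫ = sh * ‖z‖ := by
    rw [real_inner_smul_left, real_inner_smul_left, real_inner_self_eq_norm_sq]
    field_simp
  have hcoef : lprod ((1/s) • ((c, sh • (‖z‖⁻¹ • z)) : ℝ × EuclideanSpace ℝ (Fin n))) ((0:ℝ), z)
      / (1 / (-K) - lprod (lorigin n K) ((1/s) • ((c, sh • (‖z‖⁻¹ • z)) : ℝ × EuclideanSpace ℝ (Fin n))))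
      = s * sh * ‖z‖ / (1 + c) := by
    simp only [lprod, lorigin, Prod.smul_fst, Prod.smul_snd, smul_eq_mul,
      real_inner_smul_left, hinner, inner_zero_left]
    rw [← hs2]
    rw [Real.sqrt_sq hs0.le]
    have : (1:ℝ) + c ≠ 0 := by positivity
    field_simp
    linear_combination (sh * ‖z‖) * mul_inv_cancel₀ this
  rw [hcoef]
  have key : (1:ℝ) + c ≠ 0 := by positivity
  apply Prod.ext
  · simp only [Prod.fst_add, Prod.smul_fst, smul_eq_mul, lorigin, Prod.smul_snd]
    rw [← hs2] at *
    field_simp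
    rw [Real.sqrt_sq hs0.le]
    ring
  · simp only [Prod.snd_add, Prod.smul_snd, lorigin, Prod.smul_fst]
    rw [smul_smul, smul_smul, zero_add, smul_smul]
    rw [show s * sh * ‖z‖ / (1 + c) * (1 / s * sh * ‖z‖⁻¹) = c - 1 by
      field_simp; linear_combination hsq]
    module
end
end

section
/- (Distance to the reflected point.) Let w ∈ ℝ^{n+1} with ⟨w, w⟩_L > 0, let x ∈ L^n_K, and let R(x) := x − 2·(⟨w, x⟩_L / ⟨w, w⟩_L)·w. Then R(x) ∈ L^n_K, K·⟨x, R(x)⟩_L = 1 + 2·(−K)·(⟨w, x⟩_L)² / ⟨w, w⟩_L, and consequently d_L(x, R(x)) = (2/√(−K))·arsinh( √(−K)·|⟨w, x⟩_L| / √(⟨w, w⟩_L) ), where arsinh is the inverse hyperbolic sine. -/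
open scoped RealInnerProductSpace

noncomputable section

lemma lprod_sub_smul_left {n : ℕ} (x w y : ℝ × EuclideanSpace ℝ (Fin n)) (c : ℝ) :
    lprod (x - c • w) y = lprod x y - c * lprod w y := by
  simp only [lprod, Prod.fst_sub, Prod.snd_sub, Prod.smul_fst, Prod.smul_snd,
    smul_eq_mul, inner_sub_left, real_inner_smul_left]
  ring

lemma arcosh_two_arsinh {s : ℝ} (hs : 0 ≤ s) :
    arcosh (1 + 2 * s ^ 2) = 2 * Real.arsinh s := by
  have h1 : (0:ℝ) ≤ 1 + s ^ 2 := by positivity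
  have hsq : (1 + 2 * s ^ 2) ^ 2 - 1 = (2 * s * Real.sqrt (1 + s ^ 2)) ^ 2 := by
    rw [mul_pow, mul_pow, Real.sq_sqrt h1]; ring
  have h2 : Real.sqrt ((1 + 2 * s ^ 2) ^ 2 - 1) = 2 * s * Real.sqrt (1 + s ^ 2) := by
    rw [hsq, Real.sqrt_sq (by positivity)]
  have h3 : 0 < s + Real.sqrt (1 + s ^ 2) := by
    have := Real.sqrt_pos.mpr (show (0:ℝ) < 1 + s ^ 2 by positivity)
    linarith
  rw [arcosh, Real.arsinh, h2]
  have : 1 + 2 * s ^ 2 + 2 * s * Real.sqrt (1 + s ^ 2)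
      = (s + Real.sqrt (1 + s ^ 2)) ^ 2 := by
    have := Real.sq_sqrt h1
    nlinarith [this]
  rw [this, Real.log_pow]
  norm_num

set_option maxHeartbeats 1000000 in
theorem distance_to_reflected_point
    (n : ℕ) (hn : 1 ≤ n) (K : ℝ) (hK : K < 0)
    (w : ℝ × EuclideanSpace ℝ (Fin n)) (hw : 0 < lprod w w)
    (x : ℝ × EuclideanSpace ℝ (Fin n)) (hx : x ∈ LorentzModel n K)
    (Rx : ℝ × EuclideanSpace ℝ (Fin n))
    (hRx : Rx = x - (2 * (lprod w x / lprod w w)) • w) :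
    Rx ∈ LorentzModel n K ∧
    K * lprod x Rx = 1 + 2 * (-K) * (lprod w x) ^ 2 / lprod w w ∧
    dL K x Rx = (2 / Real.sqrt (-K)) *
      Real.arsinh (Real.sqrt (-K) * |lprod w x| / Real.sqrt (lprod w w)) := by
  obtain ⟨hxx, hxt⟩ := hx
  have hK' : 0 < -K := neg_pos.mpr hK
  have hKne : K ≠ 0 := ne_of_lt hK
  set a := lprod w x with ha
  set b := lprod w w with hbdef
  set c := 2 * (a / b) with hc
  have hbne : b ≠ 0 := ne_of_gt hw
  clear_value a b c
  have hca : c * a = 2 * a ^ 2 / b := by rw [hc]; field_simp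
  have hcb : c * b = 2 * a := by rw [hc]; field_simp
  have hxRx : lprod x Rx = 1 / K - 2 * a ^ 2 / b := by
    rw [lprod_comm, hRx, lprod_sub_smul_left, hxx, ← ha, hca]
  have hwRx : lprod w Rx = -a := by
    rw [lprod_comm, hRx, lprod_sub_smul_left, lprod_comm x w, ← ha, ← hbdef, hcb]
    ring
  have hRxRx : lprod Rx Rx = 1 / K := by
    have h := lprod_sub_smul_left x w Rx c
    rw [← hRx] at h
    rw [h, hxRx, hwRx, mul_neg, hca]
    ring
  -- time components
  have hxt2 : x.1 ^ 2 = ‖x.2‖ ^ 2 - 1 / K := by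
    have := hxx
    simp only [lprod, real_inner_self_eq_norm_sq] at this
    nlinarith [this]
  have hRt2 : Rx.1 ^ 2 = ‖Rx.2‖ ^ 2 - 1 / K := by
    have := hRxRx
    simp only [lprod, real_inner_self_eq_norm_sq] at this
    nlinarith [this]
  have hinvK : 1 / K < 0 := one_div_neg.mpr hK
  have hxRxneg : lprod x Rx < 0 := by
    rw [hxRx]
    have : 0 ≤ 2 * a ^ 2 / b := by positivity
    linarith
  have hlt1 : ‖x.2‖ < x.1 := by nlinarith [norm_nonneg x.2]
  have hRt : 0 < Rx.1 := by
    by_contra h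
    push_neg at h
    have hne : Rx.1 ≠ 0 := by
      intro h0
      rw [h0] at hRt2
      nlinarith [norm_nonneg Rx.2]
    have hneg : Rx.1 < 0 := lt_of_le_of_ne h hne
    have hlt2 : ‖Rx.2‖ < -Rx.1 := by nlinarith [norm_nonneg Rx.2]
    have hin : -(‖x.2‖ * ‖Rx.2‖) ≤ ⟪x.2, Rx.2⟫ := by
      have := abs_real_inner_le_norm x.2 Rx.2
      have := abs_le.mp this
      linarith [this.1]
    have : 0 < lprod x Rx := by
      simp only [lprod]
      nlinarith [norm_nonneg x.2, norm_nonneg Rx.2]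
    linarith
  have hpart2 : K * lprod x Rx = 1 + 2 * (-K) * a ^ 2 / b := by
    rw [hxRx]
    field_simp
    ring
  refine ⟨⟨hRxRx, hRt⟩, hpart2, ?_⟩
  set s := Real.sqrt (-K) * |a| / Real.sqrt b with hs
  have hs0 : 0 ≤ s := by positivity
  have hs2 : s ^ 2 = -K * a ^ 2 / b := by
    rw [hs, div_pow, mul_pow, Real.sq_sqrt hK'.le, sq_abs, Real.sq_sqrt hw.le]
  have hval : K * lprod x Rx = 1 + 2 * s ^ 2 := by
    rw [hpart2, hs2]; ring
  rw [dL, hval, arcosh_two_arsinh hs0]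
  ring
end
end

section
/- (Distance to the origin equals the norm of the logarithmic map.) Let x ∈ L^n_K with x ≠ 0̄, and define the logarithmic map at the origin log_{0̄}(x) := ( arcosh(β)/√(β² − 1) )·( x − β·0̄ ), where β := K·⟨0̄, x⟩_L. Then the Euclidean norm of log_{0̄}(x) in ℝ^{n+1} equals d_L(x, 0̄). -/
open scoped RealInnerProductSpace

noncomputable section

/-- Euclidean norm on `ℝ^{n+1} = ℝ × ℝ^n`. -/
def normE {n : ℕ} (v : ℝ × EuclideanSpace ℝ (Fin n)) : ℝ :=
  Real.sqrt (v.1 ^ 2 + ‖v.2‖ ^ 2)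

set_option maxHeartbeats 1000000 in
theorem norm_logmap_origin_eq_dist_origin
    (n : ℕ) (hn : 1 ≤ n) (K : ℝ) (hK : K < 0)
    (x : ℝ × EuclideanSpace ℝ (Fin n)) (hx : x ∈ LorentzModel n K)
    (hxo : x ≠ lorigin n K)
    (β : ℝ) (hβ : β = K * lprod (lorigin n K) x)
    (logx : ℝ × EuclideanSpace ℝ (Fin n))
    (hlog : logx = (arcosh β / Real.sqrt (β ^ 2 - 1)) • (x - β • lorigin n K)) :
    normE logx = dL K x (lorigin n K) := by
  obtain ⟨hx1, hx2⟩ := hx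
  have hK' : 0 < -K := by linarith
  set s := Real.sqrt (-K) with hs
  have hs0 : 0 < s := Real.sqrt_pos.2 hK'
  have hs2 : s ^ 2 = -K := Real.sq_sqrt hK'.le
  have hβ' : β = s * x.1 := by
    rw [hβ]
    simp only [lprod, lorigin, inner_zero_left]
    field_simp
    nlinarith
  have hKne : K ≠ 0 := ne_of_lt hK
  have h1 : -(x.1 * x.1) + ⟪x.2, x.2⟫ = 1 / K := hx1
  rw [real_inner_self_eq_norm_sq] at h1
  have h2' : K * ‖x.2‖ ^ 2 = K * (x.1 * x.1) + 1 := by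
    have h3 : K * (-(x.1 * x.1) + ‖x.2‖ ^ 2) = K * (1 / K) := by rw [h1]
    rw [mul_one_div, div_self hKne] at h3
    linarith [h3]
  have hnb : ‖x.2‖ ^ 2 = (β ^ 2 - 1) / s ^ 2 := by
    rw [hβ', mul_pow, hs2, eq_div_iff (by linarith : (-K) ≠ 0)]
    linear_combination -h2'
  have hβpos : 0 < β := by rw [hβ']; positivity
  have hβ1 : 1 < β := by
    rcases lt_or_ge 1 β with h | h
    · exact h
    exfalso
    have hle : ‖x.2‖ ^ 2 ≤ 0 := by
      rw [hnb]
      apply div_nonpos_of_nonpos_of_nonneg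
      · nlinarith
      · positivity
    have h0 : ‖x.2‖ ^ 2 = 0 := le_antisymm hle (sq_nonneg _)
    have hx2z : x.2 = 0 := by
      have := pow_eq_zero_iff (n := 2) (by norm_num) |>.1 h0
      simpa using this
    have hβone : β = 1 := by
      have : β ^ 2 = 1 := by
        rw [hnb] at h0
        have := hs0.ne'
        field_simp at h0
        linarith
      nlinarith
    apply hxo
    have hx1v : x.1 = 1 / s := by
      rw [hβone] at hβ'
      field_simp at hβ' ⊢
      linarith
    have : x = (x.1, x.2) := rfl
    rw [this, hx1v, hx2z]
    rfl
  have hr : (0:ℝ) < Real.sqrt (β ^ 2 - 1) := Real.sqrt_pos.2 (by nlinarith)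
  have hA : 0 ≤ arcosh β := by
    apply Real.log_nonneg
    have := Real.sqrt_nonneg (β ^ 2 - 1)
    linarith
  have hc : 0 ≤ arcosh β / Real.sqrt (β ^ 2 - 1) := div_nonneg hA hr.le
  have hlog1 : logx.1 = 0 := by
    rw [hlog]
    have h0 : ((arcosh β / Real.sqrt (β ^ 2 - 1)) • (x - β • lorigin n K)).1
        = (arcosh β / Real.sqrt (β ^ 2 - 1)) * (x.1 - β * (1 / s)) := rfl
    rw [h0, hβ']
    have hz : x.1 - s * x.1 * (1 / s) = 0 := by field_simp; ring
    rw [hz, mul_zero]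
  have hlog2 : logx.2 = (arcosh β / Real.sqrt (β ^ 2 - 1)) • x.2 := by
    rw [hlog]
    have h0 : ((arcosh β / Real.sqrt (β ^ 2 - 1)) • (x - β • lorigin n K)).2
        = (arcosh β / Real.sqrt (β ^ 2 - 1)) • (x.2 - β • (0 : EuclideanSpace ℝ (Fin n))) := rfl
    rw [h0, smul_zero, sub_zero]
  have hb2 : (0:ℝ) ≤ β ^ 2 - 1 := by nlinarith
  have hnx2 : ‖x.2‖ = Real.sqrt (β ^ 2 - 1) / s := by
    rw [← Real.sqrt_sq (norm_nonneg x.2), hnb, Real.sqrt_div hb2 (s ^ 2),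
      Real.sqrt_sq hs0.le]
  have hdl : K * lprod x (lorigin n K) = β := by
    simp only [lprod, lorigin, inner_zero_right]
    rw [hβ']
    rw [show (-(x.1 * (1 / Real.sqrt (-K))) + 0 : ℝ) = -(x.1 * (1 / s)) by rw [← hs]; ring]
    field_simp
    nlinarith [hs2]
  rw [normE, hlog1, hlog2, norm_smul]
  simp only [Real.norm_eq_abs, abs_of_nonneg hc]
  rw [hnx2, dL, hdl]
  have he : arcosh β / Real.sqrt (β ^ 2 - 1) * (Real.sqrt (β ^ 2 - 1) / s) =
      arcosh β / s := by
    field_simp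
  rw [he]
  have : (0:ℝ) ^ 2 + (arcosh β / s) ^ 2 = (arcosh β / s) ^ 2 := by ring
  rw [this, Real.sqrt_sq (by positivity)]
  ring
end
end

section
/- (Lorentzian centroid.) Let x_1, …, x_m ∈ L^n_K and let ν_1, …, ν_m ≥ 0 with Σ_i ν_i > 0, and set s := Σ_i ν_i·x_i. Then ⟨s, s⟩_L < 0, the point μ := s / ( √(−K)·√(−⟨s, s⟩_L) ) lies in L^n_K, and μ minimizes the weighted squared Lorentzian distance: for every y ∈ L^n_K, Σ_i ν_i·‖x_i − μ‖²_L ≤ Σ_i ν_i·‖x_i − y‖²_L, where the squared Lorentzian distance is ‖u − v‖²_L := ⟨u − v, u − v⟩_L = 2/K − 2⟨u, v⟩_L for u, v ∈ L^n_K. -/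
open scoped RealInnerProductSpace

noncomputable section

lemma lprod_smul_right {n : ℕ} (r : ℝ) (x y : ℝ × EuclideanSpace ℝ (Fin n)) :
    lprod x (r • y) = r * lprod x y := by
  rw [lprod_comm, lprod_smul_left, lprod_comm]

lemma lprod_sum_left {n m : ℕ} (f : Fin m → ℝ × EuclideanSpace ℝ (Fin n))
    (y : ℝ × EuclideanSpace ℝ (Fin n)) :
    lprod (∑ i, f i) y = ∑ i, lprod (f i) y := by
  simp [lprod, Prod.fst_sum, Prod.snd_sum, sum_inner, Finset.sum_mul,
    Finset.sum_add_distrib, Finset.sum_neg_distrib]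

lemma lprod_sub_sub {n : ℕ} (a b : ℝ × EuclideanSpace ℝ (Fin n)) :
    lprod (a - b) (a - b) = lprod a a - 2 * lprod a b + lprod b b := by
  unfold lprod
  rw [Prod.fst_sub, Prod.snd_sub, real_inner_sub_sub_self]
  rw [real_inner_comm b.2 a.2]
  ring

lemma revCS_s11 {n : ℕ} (a b : ℝ × EuclideanSpace ℝ (Fin n))
    (ha : 0 < a.1) (hb : 0 < b.1) (haa : lprod a a ≤ 0) (hbb : lprod b b ≤ 0) :
    lprod a b ≤ -(Real.sqrt (-lprod a a) * Real.sqrt (-lprod b b)) := by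
  have hA : lprod a a = -(a.1 * a.1) + ‖a.2‖ ^ 2 := by
    unfold lprod; rw [real_inner_self_eq_norm_sq]
  have hB : lprod b b = -(b.1 * b.1) + ‖b.2‖ ^ 2 := by
    unfold lprod; rw [real_inner_self_eq_norm_sq]
  have hsa : Real.sqrt (-lprod a a) ^ 2 = -lprod a a := Real.sq_sqrt (by linarith)
  have hsb : Real.sqrt (-lprod b b) ^ 2 = -lprod b b := Real.sq_sqrt (by linarith)
  have h0a : 0 ≤ Real.sqrt (-lprod a a) := Real.sqrt_nonneg _
  have h0b : 0 ≤ Real.sqrt (-lprod b b) := Real.sqrt_nonneg _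
  have hin : ⟪a.2, b.2⟫ ≤ ‖a.2‖ * ‖b.2‖ := real_inner_le_norm _ _
  have hna : 0 ≤ ‖a.2‖ := norm_nonneg _
  have hnb : 0 ≤ ‖b.2‖ := norm_nonneg _
  have key : ‖a.2‖ * ‖b.2‖ + Real.sqrt (-lprod a a) * Real.sqrt (-lprod b b) ≤ a.1 * b.1 := by
    nlinarith [sq_nonneg (‖a.2‖ * Real.sqrt (-lprod b b) - ‖b.2‖ * Real.sqrt (-lprod a a)),
      mul_pos ha hb, mul_nonneg hna hnb, mul_nonneg h0a h0b,
      mul_nonneg (mul_nonneg hna hnb) (mul_nonneg h0a h0b)]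
  have : lprod a b ≤ -(a.1 * b.1) + ‖a.2‖ * ‖b.2‖ := by
    simp only [lprod]; linarith
  linarith

theorem lorentzian_centroid
    (n : ℕ) (hn : 1 ≤ n) (K : ℝ) (hK : K < 0) (m : ℕ)
    (x : Fin m → ℝ × EuclideanSpace ℝ (Fin n))
    (hx : ∀ i, x i ∈ LorentzModel n K)
    (ν : Fin m → ℝ) (hν : ∀ i, 0 ≤ ν i) (hsum : 0 < ∑ i, ν i)
    (s : ℝ × EuclideanSpace ℝ (Fin n)) (hs : s = ∑ i, ν i • x i)
    (μ : ℝ × EuclideanSpace ℝ (Fin n))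
    (hμ : μ = (Real.sqrt (-K) * Real.sqrt (-(lprod s s)))⁻¹ • s) :
    lprod s s < 0 ∧
    μ ∈ LorentzModel n K ∧
    ∀ y ∈ LorentzModel n K,
      ∑ i, ν i * lprod (x i - μ) (x i - μ) ≤
        ∑ i, ν i * lprod (x i - y) (x i - y) := by
  have hK' : (0:ℝ) < -K := by linarith
  have hxx : ∀ i, lprod (x i) (x i) = 1 / K := fun i => (hx i).1
  have hxt : ∀ i, 0 < (x i).1 := fun i => (hx i).2
  have h1k : (1:ℝ)/K < 0 := div_neg_of_pos_of_neg one_pos hK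
  have hxx' : ∀ i, lprod (x i) (x i) ≤ 0 := by
    intro i; rw [hxx i]; exact le_of_lt h1k
  -- reverse CS between points of the model
  have hK1 : Real.sqrt (-(1/K)) ^ 2 = -(1/K) := Real.sq_sqrt (by linarith)
  have hxy : ∀ i j, lprod (x i) (x j) ≤ 1 / K := by
    intro i j
    have h := revCS_s11 (x i) (x j) (hxt i) (hxt j) (hxx' i) (hxx' j)
    rw [hxx i, hxx j] at h
    calc lprod (x i) (x j) ≤ -(Real.sqrt (-(1/K)) * Real.sqrt (-(1/K))) := h
      _ = 1 / K := by rw [← sq]; rw [hK1]; ring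
  -- expansion of lprod with s
  have hls : ∀ y, lprod s y = ∑ i, ν i * lprod (x i) y := by
    intro y
    rw [hs, lprod_sum_left]
    exact Finset.sum_congr rfl fun i _ => lprod_smul_left _ _ _
  -- lprod s s < 0
  have hss : lprod s s ≤ (∑ i, ν i) * ((∑ i, ν i) * (1 / K)) := by
    rw [hls s]
    calc ∑ i, ν i * lprod (x i) s
        ≤ ∑ i, ν i * ((∑ j, ν j) * (1 / K)) := by
          apply Finset.sum_le_sum
          intro i _
          apply mul_le_mul_of_nonneg_left _ (hν i)
          rw [lprod_comm, hls (x i)]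
          calc ∑ j, ν j * lprod (x j) (x i)
              ≤ ∑ j, ν j * (1 / K) := Finset.sum_le_sum fun j _ =>
                mul_le_mul_of_nonneg_left (hxy j i) (hν j)
            _ = (∑ j, ν j) * (1 / K) := by rw [← Finset.sum_mul]
      _ = (∑ i, ν i) * ((∑ i, ν i) * (1 / K)) := by rw [← Finset.sum_mul]
  have hssneg : lprod s s < 0 := by
    have : (∑ i, ν i) * ((∑ i, ν i) * (1 / K)) < 0 := by
      have := mul_pos hsum hsum
      nlinarith
    linarith
  -- s.1 positive
  have hst : 0 < s.1 := by
    obtain ⟨j, hj⟩ : ∃ j, 0 < ν j := by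
      by_contra h
      push_neg at h
      have : ∑ i, ν i ≤ 0 := Finset.sum_nonpos fun i _ => h i
      linarith
    rw [hs, Prod.fst_sum]
    refine Finset.sum_pos' (fun i _ => ?_) ⟨j, Finset.mem_univ j, ?_⟩
    · rw [Prod.smul_fst, smul_eq_mul]
      exact mul_nonneg (hν i) (hxt i).le
    · rw [Prod.smul_fst, smul_eq_mul]
      exact mul_pos hj (hxt j)
  -- the normalizing constant
  set c : ℝ := Real.sqrt (-K) * Real.sqrt (-(lprod s s)) with hc
  have hsqK : 0 < Real.sqrt (-K) := Real.sqrt_pos.mpr hK'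
  have hsqs : 0 < Real.sqrt (-(lprod s s)) := Real.sqrt_pos.mpr (by linarith)
  have hcpos : 0 < c := mul_pos hsqK hsqs
  have hc2 : c ^ 2 = K * lprod s s := by
    rw [hc, mul_pow, Real.sq_sqrt (le_of_lt hK'), Real.sq_sqrt (by linarith)]
    ring
  have hμmem : μ ∈ LorentzModel n K := by
    constructor
    · rw [hμ, lprod_smul_left, lprod_smul_right]
      rw [show c⁻¹ * (c⁻¹ * lprod s s) = (c ^ 2)⁻¹ * lprod s s by rw [sq]; ring]
      rw [hc2, show (K * lprod s s)⁻¹ * lprod s s = K⁻¹ * ((lprod s s)⁻¹ * lprod s s) by ring,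
        inv_mul_cancel₀ hssneg.ne, mul_one, one_div]
    · rw [hμ, Prod.smul_fst, smul_eq_mul]
      exact mul_pos (inv_pos.mpr hcpos) hst
  refine ⟨hssneg, hμmem, ?_⟩
  intro y hy
  -- the objective function
  have hobj : ∀ z : ℝ × EuclideanSpace ℝ (Fin n), lprod z z = 1 / K →
      ∑ i, ν i * lprod (x i - z) (x i - z) = (∑ i, ν i) * (2 / K) - 2 * lprod s z := by
    intro z hz
    rw [hls z, Finset.sum_mul, Finset.mul_sum, ← Finset.sum_sub_distrib]
    apply Finset.sum_congr rfl
    intro i _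
    rw [lprod_sub_sub, hxx i, hz]
    ring
  rw [hobj μ hμmem.1, hobj y hy.1]
  have hkey : lprod s y ≤ lprod s μ := by
    have h := revCS_s11 s y hst hy.2 (le_of_lt hssneg) (hy.1 ▸ le_of_lt (div_neg_of_pos_of_neg one_pos hK))
    rw [hy.1] at h
    have hμval : lprod s μ = -(Real.sqrt (-lprod s s) / Real.sqrt (-K)) := by
      rw [hμ, lprod_smul_right, hc]
      rw [show lprod s s = -(Real.sqrt (-lprod s s) * Real.sqrt (-lprod s s)) by
        rw [Real.mul_self_sqrt (by linarith)]; ring]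
      field_simp
      ring_nf; rw [Real.sqrt_sq (Real.sqrt_nonneg _)]
    rw [hμval]
    have h1 : Real.sqrt (-(1/K)) = (Real.sqrt (-K))⁻¹ := by
      rw [show -(1/K) = (-K)⁻¹ by rw [inv_neg, inv_eq_one_div], Real.sqrt_inv]
    calc lprod s y ≤ -(Real.sqrt (-lprod s s) * Real.sqrt (-(1/K))) := h
      _ = -(Real.sqrt (-lprod s s) / Real.sqrt (-K)) := by rw [h1]; ring
  linarith
end
end

section
/- (Well-definedness of the exponential map.) Let x ∈ L^n_K and let z ∈ ℝ^{n+1} with ⟨x, z⟩_L = 0 and ⟨z, z⟩_L > 0, and set α := √(−K)·√(⟨z, z⟩_L) and exp_x(z) := cosh(α)·x + sinh(α)·z/α. Then exp_x(z) ∈ L^n_K, i.e. ⟨exp_x(z), exp_x(z)⟩_L = 1/K and the time component of exp_x(z) is positive. -/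
open scoped RealInnerProductSpace

noncomputable section

lemma lprod_expand {n : ℕ} (a b : ℝ) (x z : ℝ × EuclideanSpace ℝ (Fin n)) :
    lprod (a • x + b • z) (a • x + b • z)
      = a ^ 2 * lprod x x + 2 * a * b * lprod x z + b ^ 2 * lprod z z := by
  simp only [lprod, Prod.fst_add, Prod.snd_add, Prod.smul_fst, Prod.smul_snd,
    smul_eq_mul, inner_add_left, inner_add_right, real_inner_smul_left,
    real_inner_smul_right]
  rw [real_inner_comm z.2 x.2]
  ring

lemma aux_pos (K Z t s sh ch α : ℝ) (hK : K < 0) (hz : 0 < Z) (ht : 0 < t)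
    (hs2 : s ^ 2 ≤ -K * t ^ 2 * Z - Z) (hc2 : ch ^ 2 = sh ^ 2 + 1) (hsh : 0 ≤ sh)
    (hα2 : α ^ 2 = -K * Z) (hαpos : 0 < α) (hch : 0 < ch) :
    0 < α * (ch * t) + sh * s := by
  have hAT : 0 < α * (ch * t) := mul_pos hαpos (mul_pos hch ht)
  have h1 : (sh * s) ^ 2 ≤ sh ^ 2 * (-K * t ^ 2 * Z - Z) := by
    rw [mul_pow]
    exact mul_le_mul_of_nonneg_left hs2 (sq_nonneg _)
  have h2 : (α * (ch * t)) ^ 2 = -K * Z * (ch ^ 2 * t ^ 2) := by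
    rw [mul_pow, hα2]; ring
  have hsq : (sh * s) ^ 2 < (α * (ch * t)) ^ 2 := by
    rw [h2, hc2]
    nlinarith [mul_nonneg hz.le (sq_nonneg sh),
      mul_pos (mul_pos (neg_pos.2 hK) hz) (pow_pos ht 2)]
  nlinarith [hsq, hAT, sq_nonneg (α * (ch * t) + sh * s)]

theorem expmap_well_defined
    (n : ℕ) (hn : 1 ≤ n) (K : ℝ) (hK : K < 0)
    (x : ℝ × EuclideanSpace ℝ (Fin n)) (hx : x ∈ LorentzModel n K)
    (z : ℝ × EuclideanSpace ℝ (Fin n))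
    (hxz : lprod x z = 0) (hz : 0 < lprod z z)
    (α : ℝ) (hα : α = Real.sqrt (-K) * Real.sqrt (lprod z z)) :
    Real.cosh α • x + (Real.sinh α / α) • z ∈ LorentzModel n K := by
  obtain ⟨hx1, hx2⟩ := hx
  set Z := lprod z z with hZ
  have hKne : K ≠ 0 := ne_of_lt hK
  have hα2 : α ^ 2 = -K * Z := by
    rw [hα, mul_pow, Real.sq_sqrt (by linarith), Real.sq_sqrt hz.le]
  have hαpos : 0 < α := by
    rw [hα]
    exact mul_pos (Real.sqrt_pos.2 (by linarith)) (Real.sqrt_pos.2 hz)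
  have hαne : α ≠ 0 := ne_of_gt hαpos
  have hch : Real.cosh α ^ 2 - Real.sinh α ^ 2 = 1 := Real.cosh_sq_sub_sinh_sq α
  have hc2 : Real.cosh α ^ 2 = Real.sinh α ^ 2 + 1 := by linarith
  constructor
  · rw [lprod_expand, hx1, hxz]
    have hterm : (Real.sinh α / α) ^ 2 * Z = -(Real.sinh α ^ 2 / K) := by
      rw [div_pow, hα2]
      field_simp
    rw [hterm]
    field_simp
    linear_combination α * hch
  · -- positivity of the time component
    have hgoal : (Real.cosh α • x + (Real.sinh α / α) • z).1
        = Real.cosh α * x.1 + (Real.sinh α / α) * z.1 := rfl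
    rw [hgoal]
    set t := x.1 with ht
    set s := z.1 with hs
    have htpos : 0 < t := hx2
    have hinner_xz : ⟪x.2, z.2⟫ = t * s := by
      have := hxz; simp only [lprod] at this; linarith
    have hinner_xx : ⟪x.2, x.2⟫ = t ^ 2 + 1 / K := by
      have := hx1; simp only [lprod] at this; nlinarith
    have hinner_zz : ⟪z.2, z.2⟫ = Z + s ^ 2 := by
      simp only [hZ, lprod]; ring
    have hCS : ⟪x.2, z.2⟫ * ⟪x.2, z.2⟫ ≤ ⟪x.2, x.2⟫ * ⟪z.2, z.2⟫ :=
      real_inner_mul_inner_self_le x.2 z.2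
    rw [hinner_xz, hinner_xx, hinner_zz] at hCS
    have hCS2 : K * ((t ^ 2 + 1 / K) * (Z + s ^ 2)) ≤ K * (t * s * (t * s)) :=
      mul_le_mul_of_nonpos_left hCS hK.le
    have hexp : K * ((t ^ 2 + 1 / K) * (Z + s ^ 2))
        = K * t ^ 2 * Z + K * t ^ 2 * s ^ 2 + Z + s ^ 2 := by
      field_simp; ring
    rw [hexp] at hCS2
    have hs2 : s ^ 2 ≤ -K * t ^ 2 * Z - Z := by nlinarith
    have hsinh : 0 ≤ Real.sinh α := by
      exact Real.sinh_nonneg_iff.2 hαpos.le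
    have hcoshpos : 0 < Real.cosh α := Real.cosh_pos α
    have hAT : 0 < α * (Real.cosh α * t) := mul_pos hαpos (mul_pos hcoshpos htpos)
    have h1 : (Real.sinh α * s) ^ 2 ≤ Real.sinh α ^ 2 * (-K * t ^ 2 * Z - Z) := by
      rw [mul_pow]
      exact mul_le_mul_of_nonneg_left hs2 (sq_nonneg _)
    have h2 : (α * (Real.cosh α * t)) ^ 2 = -K * Z * (Real.cosh α ^ 2 * t ^ 2) := by
      rw [mul_pow, hα2]; ring
    have hkey : 0 < α * (Real.cosh α * t) + Real.sinh α * s :=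
      aux_pos K Z t s (Real.sinh α) (Real.cosh α) α hK hz htpos hs2 hc2 hsinh hα2 hαpos hcoshpos
    have hrw : Real.cosh α * t + Real.sinh α / α * s
        = (α * (Real.cosh α * t) + Real.sinh α * s) / α := by
      field_simp
    rw [hrw]
    exact div_pos hkey hαpos
end
end
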